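/- arXiv:2012.02062 — 4 statements merged into one kernel-verified Lean document; each statement's English description precedes it below -/
import Mathlib

section
/- Suppose each block solution (s(k),x(k),y(k)) satisfies constraints (C1)–(C6) on its block T_k (with its block derived quantities computed from the block initial stocks s⁰_i(k)), and the no-crossing hypothesis holds. Then the concatenated solution on T is feasible for StochP, i.e., it satisfies constraints (C1)–(C6) on the whole horizon T with the original initial stocks s⁰_i. -/
open Finset

/-- Accumulated stock of unit `i` up to period `t`: the initial stock `s0 i` plus all the
extra stock shared to `i` by the groups it belongs to at periods `t'` with `start ≤ t' ≤ t`. -/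
def Sder {N P : Type} [Fintype P] [DecidableEq N]
    (Ngrp : P → Finset N) (s0 : N → ℤ) (s : N → P → ℕ → ℕ)
    (start : ℕ) (i : N) (t : ℕ) : ℤ :=
  s0 i + ∑ p : P, (if i ∈ Ngrp p then ∑ t' ∈ Finset.Icc start t, (s i p t' : ℤ) else 0)

/-- Amount received by unit `i` until period `t`: shipments `x j i t'` sent at periods
`start ≤ t' ≤ t` that have arrived by `t`, i.e. with `t' + ℓ j i ≤ t`. -/
def Rder {N : Type} [Fintype N] [DecidableEq N]
    (W : Finset (N × N)) (ℓ : N → N → ℕ) (x : N → N → ℕ → ℕ)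
    (start : ℕ) (i : N) (t : ℕ) : ℤ :=
  ∑ j ∈ Finset.univ.filter (fun j => (j, i) ∈ W),
    ∑ t' ∈ (Finset.Icc start t).filter (fun t' => t' + ℓ j i ≤ t), (x j i t' : ℤ)

/-- Amount delivered by unit `i` until period `t` (with `Dder _ _ start i t = 0` if `t < start`). -/
def Dder {N : Type} [Fintype N] [DecidableEq N]
    (W : Finset (N × N)) (x : N → N → ℕ → ℕ)
    (start : ℕ) (i : N) (t : ℕ) : ℤ :=
  ∑ j ∈ Finset.univ.filter (fun j => (i, j) ∈ W),
    ∑ t' ∈ Finset.Icc start t, (x i j t' : ℤ)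

/-- Effective excess of unit `i` at period `t` under scenario `ω`. -/
def Hder {N P Ω : Type} [Fintype N] [DecidableEq N] [Fintype P]
    (W : Finset (N × N)) (Ngrp : P → Finset N) (ℓ : N → N → ℕ)
    (d : N → ℕ → Ω → ℕ) (s0 : N → ℤ)
    (x : N → N → ℕ → ℕ) (s : N → P → ℕ → ℕ)
    (start : ℕ) (ω : Ω) (i : N) (t : ℕ) : ℤ :=
  max 0 (Sder Ngrp s0 s start i t + Rder W ℓ x start i t
    - Dder W x start i (t - 1) - (d i t ω : ℤ))

/-- Feasibility for (StochP): `y` is binary and constraints (C1)–(C6) hold on the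
horizon `T = {1,…,q}`, with derived quantities computed from the initial stocks `s0`. -/
def Feasible {N P Ω : Type} [Fintype N] [DecidableEq N] [Fintype P]
    (W : Finset (N × N)) (Ngrp : P → Finset N) (q : ℕ) (s0 : N → ℤ)
    (qk : P → ℕ → ℕ) (Q : N → ℕ) (ℓ : N → N → ℕ) (γ : N → ℝ) (g : N → ℕ)
    (a : N → ℕ) (d : N → ℕ → Ω → ℕ)
    (x : N → N → ℕ → ℕ) (s : N → P → ℕ → ℕ) (y : N → N → ℕ → ℕ) : Prop :=
  -- y is binary
  (∀ i j t, y i j t ≤ 1) ∧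
  -- (C1)
  (∀ (ω : Ω) (i : N), ∀ t ∈ Finset.Icc 1 q,
    (∑ j ∈ Finset.univ.filter (fun j => (i, j) ∈ W), (x i j t : ℝ)) ≤
      γ i * ((Hder W Ngrp ℓ d s0 x s 1 ω i t : ℤ) : ℝ)) ∧
  -- (C2)
  (∀ i j, (i, j) ∈ W → ∀ t ∈ Finset.Icc 1 q,
    y i j t ≤ x i j t ∧ x i j t ≤ g i * y i j t) ∧
  -- (C3)
  (∀ i : N, ∀ t ∈ Finset.Icc 1 q,
    ∑ j ∈ Finset.univ.filter (fun j => (i, j) ∈ W), y i j t ≤ Q i) ∧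
  -- (C4)
  (∀ p : P, ∀ t ∈ Finset.Icc 1 q, ∑ i ∈ Ngrp p, s i p t = qk p t) ∧
  -- (C5)
  (∀ i j k', (i, j) ∈ W → (j, k') ∈ W → ∀ t ∈ Finset.Icc 1 q,
    y i j t + y j k' t ≤ 1) ∧
  -- (C6)
  (∀ (ω : Ω) (i : N), ∀ t ∈ Finset.Icc 1 q, Hder W Ngrp ℓ d s0 x s 1 ω i t ≤ (a i : ℤ))


/-- Splitting a sum over `Icc 1 t` at a breakpoint `a`. -/
lemma sum_Icc_split {M : Type*} [AddCommMonoid M] (a t : ℕ) (f : ℕ → M)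
    (h1 : 1 ≤ a) (h2 : a ≤ t + 1) :
    ∑ t' ∈ Finset.Icc 1 t, f t'
      = (∑ t' ∈ Finset.Icc 1 (a - 1), f t') + ∑ t' ∈ Finset.Icc a t, f t' := by
  have e1 : Finset.Icc 1 t = Finset.Ioc 0 t := by
    ext z; simp only [Finset.mem_Icc, Finset.mem_Ioc]; omega
  have e2 : Finset.Icc 1 (a - 1) = Finset.Ioc 0 (a - 1) := by
    ext z; simp only [Finset.mem_Icc, Finset.mem_Ioc]; omega
  have e3 : Finset.Icc a t = Finset.Ioc (a - 1) t := by
    ext z; simp only [Finset.mem_Icc, Finset.mem_Ioc]; omega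
  rw [e1, e2, e3]
  exact (Finset.sum_Ioc_consecutive f (by omega) (by omega)).symm

/-- If each block solution `(sb k, xb k, yb k)` satisfies (C1)–(C6) on its
block `T_k = [tb (k-1), tb k)` (derived quantities computed from the block initial stocks
`s0b k`, which are obtained recursively as the available stock at the end of the previous
block), and the no-crossing hypothesis holds, then the concatenated solution
`(sc, xc, yc)` is feasible for (StochP), i.e. it satisfies (C1)–(C6) on the whole horizon
`T = {1,…,q}` with the original initial stocks `s0`. -/
theorem concatenated_solution_feasible
    (N P Ω : Type) [Fintype N] [DecidableEq N] [Fintype P]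
    (W : Finset (N × N)) (Ngrp : P → Finset N) (q : ℕ)
    (s0 : N → ℤ) (qk : P → ℕ → ℕ) (Q : N → ℕ) (ℓ : N → N → ℕ)
    (γ : N → ℝ) (g : N → ℕ) (a : N → ℕ) (d : N → ℕ → Ω → ℕ)
    -- breakpoints 1 = tb 0 < tb 1 < ⋯ < tb K = q + 1
    (K : ℕ) (hK : 1 ≤ K)
    (tb : ℕ → ℕ) (htb0 : tb 0 = 1) (htbK : tb K = q + 1)
    (htbmono : ∀ k < K, tb k < tb (k + 1))
    -- block solutions
    (xb : ℕ → N → N → ℕ → ℕ) (sb : ℕ → N → P → ℕ → ℕ) (yb : ℕ → N → N → ℕ → ℕ)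
    (hybbin : ∀ k i j t, yb k i j t ≤ 1)
    -- block initial stocks: s0b 1 = s0 and recursively the available stock at the end of block k
    (s0b : ℕ → N → ℤ)
    (hs0b1 : ∀ i, s0b 1 i = s0 i)
    (hs0brec : ∀ k, 1 ≤ k → k < K → ∀ i,
      s0b (k + 1) i =
        Sder Ngrp (s0b k) (sb k) (tb (k - 1)) i (tb k - 1)
          + Rder W ℓ (xb k) (tb (k - 1)) i (tb k - 1)
          - Dder W (xb k) (tb (k - 1)) i (tb k - 1))
    -- no-crossing hypothesis: shipments sent in a block arrive within the block
    (hnocross : ∀ k, 1 ≤ k → k ≤ K → ∀ j i, (j, i) ∈ W →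
      ∀ t' ∈ Finset.Ico (tb (k - 1)) (tb k), tb k ≤ t' + ℓ j i → xb k j i t' = 0)
    -- block constraint (C1)
    (hbC1 : ∀ k, 1 ≤ k → k ≤ K → ∀ (ω : Ω) (i : N), ∀ t ∈ Finset.Ico (tb (k - 1)) (tb k),
      (∑ j ∈ Finset.univ.filter (fun j => (i, j) ∈ W), (xb k i j t : ℝ)) ≤
        γ i * ((Hder W Ngrp ℓ d (s0b k) (xb k) (sb k) (tb (k - 1)) ω i t : ℤ) : ℝ))
    -- block constraint (C2)
    (hbC2 : ∀ k, 1 ≤ k → k ≤ K → ∀ i j, (i, j) ∈ W → ∀ t ∈ Finset.Ico (tb (k - 1)) (tb k),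
      yb k i j t ≤ xb k i j t ∧ xb k i j t ≤ g i * yb k i j t)
    -- block constraint (C3)
    (hbC3 : ∀ k, 1 ≤ k → k ≤ K → ∀ i : N, ∀ t ∈ Finset.Ico (tb (k - 1)) (tb k),
      ∑ j ∈ Finset.univ.filter (fun j => (i, j) ∈ W), yb k i j t ≤ Q i)
    -- block constraint (C4)
    (hbC4 : ∀ k, 1 ≤ k → k ≤ K → ∀ p : P, ∀ t ∈ Finset.Ico (tb (k - 1)) (tb k),
      ∑ i ∈ Ngrp p, sb k i p t = qk p t)
    -- block constraint (C5)
    (hbC5 : ∀ k, 1 ≤ k → k ≤ K → ∀ i j k', (i, j) ∈ W → (j, k') ∈ W →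
      ∀ t ∈ Finset.Ico (tb (k - 1)) (tb k), yb k i j t + yb k j k' t ≤ 1)
    -- block constraint (C6)
    (hbC6 : ∀ k, 1 ≤ k → k ≤ K → ∀ (ω : Ω) (i : N), ∀ t ∈ Finset.Ico (tb (k - 1)) (tb k),
      Hder W Ngrp ℓ d (s0b k) (xb k) (sb k) (tb (k - 1)) ω i t ≤ (a i : ℤ))
    -- the concatenated solution: at each t ∈ T_k it takes the block-k values
    (xc : N → N → ℕ → ℕ) (sc : N → P → ℕ → ℕ) (yc : N → N → ℕ → ℕ)
    (hxc : ∀ k, 1 ≤ k → k ≤ K → ∀ t ∈ Finset.Ico (tb (k - 1)) (tb k),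
      ∀ i j, xc i j t = xb k i j t)
    (hsc : ∀ k, 1 ≤ k → k ≤ K → ∀ t ∈ Finset.Ico (tb (k - 1)) (tb k),
      ∀ (i : N) (p : P), sc i p t = sb k i p t)
    (hyc : ∀ k, 1 ≤ k → k ≤ K → ∀ t ∈ Finset.Ico (tb (k - 1)) (tb k),
      ∀ i j, yc i j t = yb k i j t)
    (hycz : ∀ i j t, yc i j t ≤ 1) :
    Feasible W Ngrp q s0 qk Q ℓ γ g a d xc sc yc := by
  classical
  -- monotonicity of the breakpoints
  have hmono : ∀ a b, a ≤ b → b ≤ K → tb a ≤ tb b := by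
    intro a b hab hbK
    induction b with
    | zero =>
      have : a = 0 := by omega
      simp [this]
    | succ n ih =>
      rcases Nat.eq_or_lt_of_le hab with h | h
      · simp [h]
      · have han : a ≤ n := by omega
        exact le_trans (ih han (by omega)) (le_of_lt (htbmono n (by omega)))
  have htbpos : ∀ k, k ≤ K → 1 ≤ tb k := by
    intro k hk
    have := hmono 0 k (Nat.zero_le _) hk
    omega
  have htbm : ∀ k, 1 ≤ k → k ≤ K → tb (k - 1) < tb k := by
    intro k h1 h2
    have h := htbmono (k - 1) (by omega)
    have e : k - 1 + 1 = k := by omega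
    rwa [e] at h
  -- every period 1 ≤ t ≤ q belongs to some block
  have hblock : ∀ t, 1 ≤ t → t ≤ q → ∃ k, 1 ≤ k ∧ k ≤ K ∧ tb (k - 1) ≤ t ∧ t < tb k := by
    intro t ht1 htq
    have aux : ∀ m n, n + m = K → tb n ≤ t →
        ∃ k, 1 ≤ k ∧ k ≤ K ∧ tb (k - 1) ≤ t ∧ t < tb k := by
      intro m
      induction m with
      | zero =>
        intro n hn hle
        exfalso
        have hnK : n = K := by omega
        rw [hnK, htbK] at hle
        omega
      | succ m ih =>
        intro n hn hle
        by_cases h : t < tb (n + 1)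
        · exact ⟨n + 1, by omega, by omega, by simpa using hle, h⟩
        · exact ih (n + 1) (by omega) (by omega)
    exact aux K 0 (by omega) (by rw [htb0]; exact ht1)
  -- shipments sent strictly before block k have all arrived by time tb (k-1) - 1
  have hdrop : ∀ k, 1 ≤ k → k ≤ K → ∀ j i : N, (j, i) ∈ W →
      ∀ t' ∈ Finset.Icc 1 (tb (k - 1) - 1), xc j i t' ≠ 0 → t' + ℓ j i ≤ tb (k - 1) - 1 := by
    intro k hk1 hkK j i hW t' ht' hne
    rw [Finset.mem_Icc] at ht'
    have ha1 : 1 ≤ tb (k - 1) := htbpos (k - 1) (by omega)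
    have htq : t' ≤ q := by
      have h2 := hmono (k - 1) K (by omega) le_rfl
      rw [htbK] at h2
      omega
    obtain ⟨k', hk'1, hk'K, hl, hr⟩ := hblock t' ht'.1 htq
    have hmem : t' ∈ Finset.Ico (tb (k' - 1)) (tb k') := Finset.mem_Ico.mpr ⟨hl, hr⟩
    have hx : xc j i t' = xb k' j i t' := hxc k' hk'1 hk'K t' hmem j i
    have hkk : k' ≤ k - 1 := by
      by_contra hh
      push_neg at hh
      have h3 : tb (k - 1) ≤ tb (k' - 1) := hmono (k - 1) (k' - 1) (by omega) (by omega)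
      omega
    have hk'le : tb k' ≤ tb (k - 1) := hmono k' (k - 1) hkk (by omega)
    by_contra hcon
    push_neg at hcon
    have hz : xb k' j i t' = 0 := hnocross k' hk'1 hk'K j i hW t' hmem (by omega)
    exact hne (hx.trans hz)
  -- key decomposition identity
  have key : ∀ k, 1 ≤ k → k ≤ K → ∀ (i : N) (t u : ℕ),
      tb (k - 1) ≤ t → t < tb k → tb (k - 1) ≤ u + 1 → u < tb k →
      Sder Ngrp s0 sc 1 i t + Rder W ℓ xc 1 i t - Dder W xc 1 i u
      = (Sder Ngrp s0 sc 1 i (tb (k - 1) - 1) + Rder W ℓ xc 1 i (tb (k - 1) - 1)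
          - Dder W xc 1 i (tb (k - 1) - 1)) - s0b k i
        + (Sder Ngrp (s0b k) (sb k) (tb (k - 1)) i t + Rder W ℓ (xb k) (tb (k - 1)) i t
          - Dder W (xb k) (tb (k - 1)) i u) := by
    intro k hk1 hkK i t u ht1 ht2 hu1 hu2
    have ha1 : 1 ≤ tb (k - 1) := htbpos (k - 1) (by omega)
    have hS : Sder Ngrp s0 sc 1 i t
        = Sder Ngrp s0 sc 1 i (tb (k - 1) - 1)
          + (Sder Ngrp (s0b k) (sb k) (tb (k - 1)) i t - s0b k i) := by
      simp only [Sder]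
      have hsplit : ∀ p : P,
          (if i ∈ Ngrp p then ∑ t' ∈ Finset.Icc 1 t, (sc i p t' : ℤ) else 0)
          = (if i ∈ Ngrp p then ∑ t' ∈ Finset.Icc 1 (tb (k - 1) - 1), (sc i p t' : ℤ) else 0)
            + (if i ∈ Ngrp p then
                ∑ t' ∈ Finset.Icc (tb (k - 1)) t, (sb k i p t' : ℤ) else 0) := by
        intro p
        by_cases h : i ∈ Ngrp p
        · simp only [h, if_true]
          rw [sum_Icc_split (tb (k - 1)) t _ ha1 (by omega)]
          congr 1
          refine Finset.sum_congr rfl (fun t' ht' => ?_)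
          rw [Finset.mem_Icc] at ht'
          rw [hsc k hk1 hkK t' (Finset.mem_Ico.mpr ⟨ht'.1, by omega⟩) i p]
        · simp [h]
      rw [Finset.sum_congr rfl (fun p _ => hsplit p), Finset.sum_add_distrib]
      ring
    have hR : Rder W ℓ xc 1 i t
        = Rder W ℓ xc 1 i (tb (k - 1) - 1) + Rder W ℓ (xb k) (tb (k - 1)) i t := by
      simp only [Rder]
      rw [← Finset.sum_add_distrib]
      refine Finset.sum_congr rfl (fun j hj => ?_)
      rw [Finset.mem_filter] at hj
      have hjW : (j, i) ∈ W := hj.2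
      have hdropt : ∀ t' ∈ Finset.Icc 1 (tb (k - 1) - 1),
          (xc j i t' : ℤ) ≠ 0 → t' + ℓ j i ≤ t := by
        intro t' ht' hne
        have := hdrop k hk1 hkK j i hjW t' ht' (by exact_mod_cast hne)
        omega
      have hdropa : ∀ t' ∈ Finset.Icc 1 (tb (k - 1) - 1),
          (xc j i t' : ℤ) ≠ 0 → t' + ℓ j i ≤ tb (k - 1) - 1 := by
        intro t' ht' hne
        exact hdrop k hk1 hkK j i hjW t' ht' (by exact_mod_cast hne)
      calc ∑ t' ∈ (Finset.Icc 1 t).filter (fun t' => t' + ℓ j i ≤ t), (xc j i t' : ℤ)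
          = ∑ t' ∈ Finset.Icc 1 t, (if t' + ℓ j i ≤ t then (xc j i t' : ℤ) else 0) :=
            Finset.sum_filter _ _
        _ = (∑ t' ∈ Finset.Icc 1 (tb (k - 1) - 1),
              if t' + ℓ j i ≤ t then (xc j i t' : ℤ) else 0)
            + ∑ t' ∈ Finset.Icc (tb (k - 1)) t,
              (if t' + ℓ j i ≤ t then (xc j i t' : ℤ) else 0) :=
            sum_Icc_split (tb (k - 1)) t _ ha1 (by omega)
        _ = (∑ t' ∈ (Finset.Icc 1 (tb (k - 1) - 1)).filter (fun t' => t' + ℓ j i ≤ t),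
              (xc j i t' : ℤ))
            + ∑ t' ∈ (Finset.Icc (tb (k - 1)) t).filter (fun t' => t' + ℓ j i ≤ t),
              (xc j i t' : ℤ) := by
            rw [Finset.sum_filter, Finset.sum_filter]
        _ = (∑ t' ∈ Finset.Icc 1 (tb (k - 1) - 1), (xc j i t' : ℤ))
            + ∑ t' ∈ (Finset.Icc (tb (k - 1)) t).filter (fun t' => t' + ℓ j i ≤ t),
              (xb k j i t' : ℤ) := by
            congr 1
            · exact Finset.sum_filter_of_ne hdropt
            · refine Finset.sum_congr rfl (fun t' ht' => ?_)
              rw [Finset.mem_filter, Finset.mem_Icc] at ht'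
              rw [hxc k hk1 hkK t' (Finset.mem_Ico.mpr ⟨ht'.1.1, by omega⟩) j i]
        _ = (∑ t' ∈ (Finset.Icc 1 (tb (k - 1) - 1)).filter
                (fun t' => t' + ℓ j i ≤ tb (k - 1) - 1), (xc j i t' : ℤ))
            + ∑ t' ∈ (Finset.Icc (tb (k - 1)) t).filter (fun t' => t' + ℓ j i ≤ t),
              (xb k j i t' : ℤ) := by
            rw [Finset.sum_filter_of_ne hdropa]
    have hD : Dder W xc 1 i u
        = Dder W xc 1 i (tb (k - 1) - 1) + Dder W (xb k) (tb (k - 1)) i u := by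
      simp only [Dder]
      rw [← Finset.sum_add_distrib]
      refine Finset.sum_congr rfl (fun j hj => ?_)
      rw [sum_Icc_split (tb (k - 1)) u _ ha1 (by omega)]
      congr 1
      refine Finset.sum_congr rfl (fun t' ht' => ?_)
      rw [Finset.mem_Icc] at ht'
      rw [hxc k hk1 hkK t' (Finset.mem_Ico.mpr ⟨ht'.1, by omega⟩) i j]
    rw [hS, hR, hD]
    ring
  -- the block initial stocks equal the concatenated available stock
  have hEeq : ∀ k, 1 ≤ k → k ≤ K → ∀ i,
      s0b k i = Sder Ngrp s0 sc 1 i (tb (k - 1) - 1) + Rder W ℓ xc 1 i (tb (k - 1) - 1)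
        - Dder W xc 1 i (tb (k - 1) - 1) := by
    intro k
    induction k with
    | zero => intro h; exact absurd h (by omega)
    | succ k ih =>
      intro _ hkK i
      by_cases hk : k = 0
      · subst hk
        have hIcc : Finset.Icc 1 (tb 0 - 1) = (∅ : Finset ℕ) := by
          rw [htb0]; exact Finset.Icc_eq_empty (by omega)
        rw [hs0b1 i]
        simp [Sder, Rder, Dder, hIcc]
      · have hk1 : 1 ≤ k := by omega
        have hkK' : k ≤ K := by omega
        rw [hs0brec k hk1 (by omega) i]
        have hm : tb (k - 1) < tb k := htbm k hk1 hkK'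
        have hp : 1 ≤ tb k := htbpos k hkK'
        have hkey := key k hk1 hkK' i (tb k - 1) (tb k - 1)
          (by omega) (by omega) (by omega) (by omega)
        have hih := ih hk1 hkK' i
        simp only [Nat.add_sub_cancel]
        linarith
  -- the concatenated Hder equals the block Hder on each block
  have hH : ∀ k, 1 ≤ k → k ≤ K → ∀ (ω : Ω) (i : N) (t : ℕ),
      tb (k - 1) ≤ t → t < tb k →
      Hder W Ngrp ℓ d s0 xc sc 1 ω i t
        = Hder W Ngrp ℓ d (s0b k) (xb k) (sb k) (tb (k - 1)) ω i t := by
    intro k hk1 hkK ω i t ht1 ht2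
    have ha1 : 1 ≤ tb (k - 1) := htbpos (k - 1) (by omega)
    have hkey := key k hk1 hkK i t (t - 1) ht1 ht2 (by omega) (by omega)
    have hih := hEeq k hk1 hkK i
    simp only [Hder]
    congr 1
    linarith
  unfold Feasible
  refine ⟨hycz, ?_, ?_, ?_, ?_, ?_, ?_⟩
  · -- (C1)
    intro ω i t ht
    rw [Finset.mem_Icc] at ht
    obtain ⟨k, hk1, hkK, hl, hr⟩ := hblock t ht.1 ht.2
    have hmem : t ∈ Finset.Ico (tb (k - 1)) (tb k) := Finset.mem_Ico.mpr ⟨hl, hr⟩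
    have hsum : ∀ j ∈ Finset.univ.filter (fun j => (i, j) ∈ W),
        (xc i j t : ℝ) = (xb k i j t : ℝ) := by
      intro j _
      rw [hxc k hk1 hkK t hmem i j]
    rw [Finset.sum_congr rfl hsum, hH k hk1 hkK ω i t hl hr]
    exact hbC1 k hk1 hkK ω i t hmem
  · -- (C2)
    intro i j hW t ht
    rw [Finset.mem_Icc] at ht
    obtain ⟨k, hk1, hkK, hl, hr⟩ := hblock t ht.1 ht.2
    have hmem : t ∈ Finset.Ico (tb (k - 1)) (tb k) := Finset.mem_Ico.mpr ⟨hl, hr⟩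
    rw [hxc k hk1 hkK t hmem i j, hyc k hk1 hkK t hmem i j]
    exact hbC2 k hk1 hkK i j hW t hmem
  · -- (C3)
    intro i t ht
    rw [Finset.mem_Icc] at ht
    obtain ⟨k, hk1, hkK, hl, hr⟩ := hblock t ht.1 ht.2
    have hmem : t ∈ Finset.Ico (tb (k - 1)) (tb k) := Finset.mem_Ico.mpr ⟨hl, hr⟩
    have hsum : ∀ j ∈ Finset.univ.filter (fun j => (i, j) ∈ W),
        yc i j t = yb k i j t := by
      intro j _
      exact hyc k hk1 hkK t hmem i j
    rw [Finset.sum_congr rfl hsum]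
    exact hbC3 k hk1 hkK i t hmem
  · -- (C4)
    intro p t ht
    rw [Finset.mem_Icc] at ht
    obtain ⟨k, hk1, hkK, hl, hr⟩ := hblock t ht.1 ht.2
    have hmem : t ∈ Finset.Ico (tb (k - 1)) (tb k) := Finset.mem_Ico.mpr ⟨hl, hr⟩
    have hsum : ∀ i ∈ Ngrp p, sc i p t = sb k i p t := by
      intro i _
      exact hsc k hk1 hkK t hmem i p
    rw [Finset.sum_congr rfl hsum]
    exact hbC4 k hk1 hkK p t hmem
  · -- (C5)
    intro i j k' hW1 hW2 t ht
    rw [Finset.mem_Icc] at ht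
    obtain ⟨k, hk1, hkK, hl, hr⟩ := hblock t ht.1 ht.2
    have hmem : t ∈ Finset.Ico (tb (k - 1)) (tb k) := Finset.mem_Ico.mpr ⟨hl, hr⟩
    rw [hyc k hk1 hkK t hmem i j, hyc k hk1 hkK t hmem j k']
    exact hbC5 k hk1 hkK i j k' hW1 hW2 t hmem
  · -- (C6)
    intro ω i t ht
    rw [Finset.mem_Icc] at ht
    obtain ⟨k, hk1, hkK, hl, hr⟩ := hblock t ht.1 ht.2
    have hmem : t ∈ Finset.Ico (tb (k - 1)) (tb k) := Finset.mem_Ico.mpr ⟨hl, hr⟩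
    rw [hH k hk1 hkK ω i t hl hr]
    exact hbC6 k hk1 hkK ω i t hmem
end

section
/- Under the no-crossing hypothesis, for every unit i ∈ N, every block index k ∈ {1,…,K} and every period t ∈ T_k, the available stock computed within block k equals the available stock of the concatenated solution: S_i^t(k) + R_i^t(k) − D_i^{t−1}(k) = S_i^t + R_i^t − D_i^{t−1}, where the right-hand derived quantities are computed from the concatenated solution on T with the original initial stock s⁰_i. -/
/-!
If no shipment sent before period `m` arrives at or after `m`, then restarting the accumulation
of `S`, `R` and `D` at `m`, with the end-of-period stock at `m - 1` as new initial stock, does not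
change the stock at any later period: `S` and `D` are plain sums over periods, and the shipments
counted by `R` split into those sent before `m`, all received by `m - 1`, and those sent from `m`
on. The block initial stocks are exactly these restart values (induction over the blocks), and on
each block the block solution coincides with the concatenation.
-/

open Finset

theorem sum_Icc_eq_sum_Icc_sub_one_add {M : Type*} [AddCommMonoid M] (f : ℕ → M) {a m t : ℕ}
    (hm : 0 < m) (ham : a ≤ m) (hmt : m ≤ t + 1) :
    ∑ t' ∈ Icc a t, f t' = ∑ t' ∈ Icc a (m - 1), f t' + ∑ t' ∈ Icc m t, f t' := by
  rw [← Ico_add_one_right_eq_Icc a t, ← Ico_add_one_right_eq_Icc a (m - 1),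
    ← Ico_add_one_right_eq_Icc m t, Nat.sub_one_add_one hm.ne', sum_Ico_consecutive f ham hmt]

section Shares

variable {N P : Type} [Fintype P] [DecidableEq N] {Ngrp : P → Finset N} {s0 : N → ℤ}
  {s s' : N → P → ℕ → ℕ} {a m t : ℕ} {i : N}

theorem Sder_congr (h : ∀ p, ∀ t' ∈ Icc a t, s i p t' = s' i p t') :
    Sder Ngrp s0 s a i t = Sder Ngrp s0 s' a i t := by
  unfold Sder
  congr 1
  refine sum_congr rfl fun p _ => ?_
  rw [sum_congr rfl fun t' ht' => congrArg ((↑) : ℕ → ℤ) (h p t' ht')]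

theorem Sder_split (s0' : N → ℤ) (hm : 0 < m) (ham : a ≤ m) (hmt : m ≤ t + 1) :
    Sder Ngrp s0 s a i t = Sder Ngrp s0 s a i (m - 1) + (Sder Ngrp s0' s m i t - s0' i) := by
  simp only [Sder, sum_Icc_eq_sum_Icc_sub_one_add _ hm ham hmt, ite_add_zero, sum_add_distrib]
  ring

end Shares

section Shipments

variable {N : Type} {W : Finset (N × N)} {ℓ : N → N → ℕ} {x x' : N → N → ℕ → ℕ} {a m m' t : ℕ}
  {i : N}

def NoCrossing (W : Finset (N × N)) (ℓ : N → N → ℕ) (x : N → N → ℕ → ℕ) (a m : ℕ) : Prop :=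
  ∀ j i, (j, i) ∈ W → ∀ t' ∈ Ico a m, m ≤ t' + ℓ j i → x j i t' = 0

theorem noCrossing_self : NoCrossing W ℓ x a a := by
  simp [NoCrossing]

theorem NoCrossing.congr (hx : NoCrossing W ℓ x a m)
    (h : ∀ j i, ∀ t' ∈ Ico a m, x j i t' = x' j i t') : NoCrossing W ℓ x' a m :=
  fun j i hji t' ht' hm => h j i t' ht' ▸ hx j i hji t' ht' hm

theorem NoCrossing.trans (h₁ : NoCrossing W ℓ x a m) (h₂ : NoCrossing W ℓ x m m')
    (hm : m ≤ m') : NoCrossing W ℓ x a m' := by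
  intro j i hji t' ht' hm'
  rcases lt_or_ge t' m with h | h
  · exact h₁ j i hji t' (mem_Ico.2 ⟨(mem_Ico.1 ht').1, h⟩) (hm.trans hm')
  · exact h₂ j i hji t' (mem_Ico.2 ⟨h, (mem_Ico.1 ht').2⟩) hm'

theorem noCrossing_of_blocks {tb : ℕ → ℕ} {K : ℕ} (htb : ∀ k < K, tb k ≤ tb (k + 1))
    (hx : ∀ k < K, NoCrossing W ℓ x (tb k) (tb (k + 1))) :
    ∀ n ≤ K, NoCrossing W ℓ x (tb 0) (tb n)
  | 0, _ => noCrossing_self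
  | n + 1, hn => (noCrossing_of_blocks htb hx n (by omega)).trans (hx n hn) (htb n hn)

variable [Fintype N] [DecidableEq N]

theorem Rder_congr (h : ∀ j, ∀ t' ∈ Icc a t, x j i t' = x' j i t') :
    Rder W ℓ x a i t = Rder W ℓ x' a i t :=
  sum_congr rfl fun j _ => sum_congr rfl fun t' ht' => by
    rw [h j t' (mem_filter.1 ht').1]

theorem Dder_congr (h : ∀ j, ∀ t' ∈ Icc a t, x i j t' = x' i j t') :
    Dder W x a i t = Dder W x' a i t :=
  sum_congr rfl fun j _ => sum_congr rfl fun t' ht' => by rw [h j t' ht']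

theorem Dder_split (hm : 0 < m) (ham : a ≤ m) (hmt : m ≤ t + 1) :
    Dder W x a i t = Dder W x a i (m - 1) + Dder W x m i t := by
  simp only [Dder, sum_Icc_eq_sum_Icc_sub_one_add _ hm ham hmt, sum_add_distrib]

theorem Rder_split (hx : NoCrossing W ℓ x a m) (hm : 0 < m) (ham : a ≤ m) (hmt : m ≤ t + 1) :
    Rder W ℓ x a i t = Rder W ℓ x a i (m - 1) + Rder W ℓ x m i t := by
  simp only [Rder, ← sum_add_distrib]
  refine sum_congr rfl fun j hj => ?_
  have hji : (j, i) ∈ W := by simpa using hj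
  simp only [sum_filter, sum_Icc_eq_sum_Icc_sub_one_add _ hm ham hmt]
  congr 1
  refine sum_congr rfl fun t' ht' => ?_
  have ht'm : t' ∈ Ico a m := by
    rw [mem_Icc] at ht'; exact mem_Ico.2 ⟨ht'.1, by omega⟩
  by_cases harr : t' + ℓ j i ≤ m - 1
  · rw [if_pos (by omega), if_pos harr]
  · rw [hx j i hji t' ht'm (by omega)]; simp

end Shipments

section Stock

variable {N P : Type} [Fintype N] [DecidableEq N] [Fintype P] {W : Finset (N × N)}
  {Ngrp : P → Finset N} {ℓ : N → N → ℕ} {s0 : N → ℤ} {s s' : N → P → ℕ → ℕ}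
  {x x' : N → N → ℕ → ℕ} {a m t u : ℕ} {i : N}

/-- The stock at the end of period `t`: unlike the available stock, it subtracts the deliveries
of period `t` itself. -/
def endStock (Ngrp : P → Finset N) (W : Finset (N × N)) (ℓ : N → N → ℕ) (s0 : N → ℤ)
    (s : N → P → ℕ → ℕ) (x : N → N → ℕ → ℕ) (a : ℕ) (i : N) (t : ℕ) : ℤ :=
  Sder Ngrp s0 s a i t + Rder W ℓ x a i t - Dder W x a i t

theorem endStock_of_lt (h : t < a) : endStock Ngrp W ℓ s0 s x a i t = s0 i := by
  simp [endStock, Sder, Rder, Dder, Icc_eq_empty_of_lt h]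

theorem stock_congr (hs : ∀ p, ∀ t' ∈ Icc a t, s i p t' = s' i p t')
    (hx : ∀ j k, ∀ t' ∈ Icc a t, x j k t' = x' j k t') (hut : u ≤ t) :
    Sder Ngrp s0 s a i t + Rder W ℓ x a i t - Dder W x a i u
      = Sder Ngrp s0 s' a i t + Rder W ℓ x' a i t - Dder W x' a i u := by
  rw [Sder_congr hs, Rder_congr fun j => hx j i,
    Dder_congr fun j t' ht' => hx i j t' (Icc_subset_Icc_right hut ht')]

theorem stock_restart (hx : NoCrossing W ℓ x a m) (hm : 0 < m) (ham : a ≤ m) (hmu : m ≤ u + 1)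
    (hut : u ≤ t) (hs : ∀ p, ∀ t' ∈ Icc m t, s i p t' = s' i p t')
    (hx' : ∀ j k, ∀ t' ∈ Icc m t, x j k t' = x' j k t') :
    Sder Ngrp (fun j => endStock Ngrp W ℓ s0 s x a j (m - 1)) s' m i t
        + Rder W ℓ x' m i t - Dder W x' m i u
      = Sder Ngrp s0 s a i t + Rder W ℓ x a i t - Dder W x a i u := by
  have hmt : m ≤ t + 1 := by omega
  rw [← stock_congr hs hx' hut, Sder_split (fun j => endStock Ngrp W ℓ s0 s x a j (m - 1)) hm ham hmt,
    Rder_split hx hm ham hmt, Dder_split hm ham hmu, endStock]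
  ring

end Stock

theorem block_available_stock_eq_global_general
    (N P : Type) [Fintype N] [DecidableEq N] [Fintype P]
    (W : Finset (N × N)) (Ngrp : P → Finset N)
    (s0 : N → ℤ) (ℓ : N → N → ℕ)
    -- breakpoints 1 = tb 0 < tb 1 < ⋯ < tb K = q + 1
    (K : ℕ)
    (tb : ℕ → ℕ) (htb0 : tb 0 = 1)
    (htbmono : ∀ k < K, tb k < tb (k + 1))
    -- block solutions
    (xb : ℕ → N → N → ℕ → ℕ) (sb : ℕ → N → P → ℕ → ℕ)
    -- block initial stocks: s0b 1 = s0 and recursively the available stock at the end of block k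
    (s0b : ℕ → N → ℤ)
    (hs0b1 : ∀ i, s0b 1 i = s0 i)
    (hs0brec : ∀ k, 1 ≤ k → k < K → ∀ i,
      s0b (k + 1) i =
        Sder Ngrp (s0b k) (sb k) (tb (k - 1)) i (tb k - 1)
          + Rder W ℓ (xb k) (tb (k - 1)) i (tb k - 1)
          - Dder W (xb k) (tb (k - 1)) i (tb k - 1))
    -- no-crossing hypothesis: shipments sent in a block arrive within the block
    (hnocross : ∀ k, 1 ≤ k → k ≤ K → ∀ j i, (j, i) ∈ W →
      ∀ t' ∈ Finset.Ico (tb (k - 1)) (tb k), tb k ≤ t' + ℓ j i → xb k j i t' = 0)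
    -- the concatenated solution: at each t ∈ T_k it takes the block-k values
    (xc : N → N → ℕ → ℕ) (sc : N → P → ℕ → ℕ)
    (hxc : ∀ k, 1 ≤ k → k ≤ K → ∀ t ∈ Finset.Ico (tb (k - 1)) (tb k),
      ∀ i j, xc i j t = xb k i j t)
    (hsc : ∀ k, 1 ≤ k → k ≤ K → ∀ t ∈ Finset.Ico (tb (k - 1)) (tb k),
      ∀ (i : N) (p : P), sc i p t = sb k i p t) :
    ∀ i : N, ∀ k, 1 ≤ k → k ≤ K → ∀ t ∈ Finset.Ico (tb (k - 1)) (tb k),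
      Sder Ngrp (s0b k) (sb k) (tb (k - 1)) i t
        + Rder W ℓ (xb k) (tb (k - 1)) i t
        - Dder W (xb k) (tb (k - 1)) i (t - 1)
      = Sder Ngrp s0 sc 1 i t + Rder W ℓ xc 1 i t - Dder W xc 1 i (t - 1) := by
  have hx : ∀ n < K, ∀ t ∈ Ico (tb n) (tb (n + 1)), ∀ i j, xc i j t = xb (n + 1) i j t :=
    fun n hn => by simpa only [Nat.add_sub_cancel] using hxc (n + 1) (by omega) hn
  have hs : ∀ n < K, ∀ t ∈ Ico (tb n) (tb (n + 1)), ∀ i p, sc i p t = sb (n + 1) i p t :=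
    fun n hn => by simpa only [Nat.add_sub_cancel] using hsc (n + 1) (by omega) hn
  have hmono : MonotoneOn tb (Set.Iic K) :=
    monotoneOn_of_le_succ Set.ordConnected_Iic fun k _ _ hk => (htbmono k hk).le
  have hpos : ∀ n ≤ K, 0 < tb n := fun n hn => by
    have := hmono (Set.mem_Iic.2 K.zero_le) hn n.zero_le; omega
  have hcross : ∀ n ≤ K, NoCrossing W ℓ xc 1 (tb n) :=
    htb0 ▸ noCrossing_of_blocks (fun k hk => (htbmono k hk).le) fun k hk =>
      NoCrossing.congr (by have := hnocross (k + 1) (by omega) hk; rwa [Nat.add_sub_cancel] at this)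
        fun j i t' ht' => (hx k hk t' ht' j i).symm
  have hblock : ∀ n < K, ∀ i t u, t ∈ Ico (tb n) (tb (n + 1)) → tb n ≤ u + 1 → u ≤ t →
      Sder Ngrp (fun j => endStock Ngrp W ℓ s0 sc xc 1 j (tb n - 1)) (sb (n + 1)) (tb n) i t
          + Rder W ℓ (xb (n + 1)) (tb n) i t - Dder W (xb (n + 1)) (tb n) i u
        = Sder Ngrp s0 sc 1 i t + Rder W ℓ xc 1 i t - Dder W xc 1 i u :=
    fun n hn i t u ht hu hut => stock_restart (hcross n hn.le) (hpos n hn.le) (hpos n hn.le) hu hut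
      (fun p t' ht' => hs n hn t' (Icc_subset_Ico_right (mem_Ico.1 ht).2 ht') i p)
      (fun j k t' ht' => hx n hn t' (Icc_subset_Ico_right (mem_Ico.1 ht).2 ht') j k)
  have hs0b : ∀ n < K, s0b (n + 1) = fun j => endStock Ngrp W ℓ s0 sc xc 1 j (tb n - 1) := by
    intro n hn
    induction n with
    | zero => funext j; rw [endStock_of_lt (by omega), hs0b1]
    | succ n ih =>
      funext j
      have hlt := htbmono n (by omega)
      rw [hs0brec (n + 1) (by omega) hn, Nat.add_sub_cancel, ih (by omega)]
      exact hblock n (by omega) j _ _ (by simp; omega) (by omega) le_rfl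
  intro i k hk1 hkK t ht
  obtain ⟨n, rfl⟩ : ∃ n, k = n + 1 := ⟨k - 1, by omega⟩
  rw [Nat.add_sub_cancel] at ht ⊢
  rw [hs0b n hkK]
  exact hblock n hkK i t (t - 1) ht (by simp at ht; omega) (Nat.sub_le t 1)

/-- Under the no-crossing hypothesis, for every unit `i`, block `k` and
period `t ∈ T_k`, the available stock computed within block `k` (from the block initial
stocks `s0b k`) equals the available stock of the concatenated solution computed on the
whole horizon from the original initial stock `s0`:
`S_i^t(k) + R_i^t(k) − D_i^{t−1}(k) = S_i^t + R_i^t − D_i^{t−1}`. -/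
theorem block_available_stock_eq_global
    (N P : Type) [Fintype N] [DecidableEq N] [Fintype P]
    (W : Finset (N × N)) (Ngrp : P → Finset N) (q : ℕ)
    (s0 : N → ℤ) (ℓ : N → N → ℕ)
    -- breakpoints 1 = tb 0 < tb 1 < ⋯ < tb K = q + 1
    (K : ℕ) (hK : 1 ≤ K)
    (tb : ℕ → ℕ) (htb0 : tb 0 = 1) (htbK : tb K = q + 1)
    (htbmono : ∀ k < K, tb k < tb (k + 1))
    -- block solutions
    (xb : ℕ → N → N → ℕ → ℕ) (sb : ℕ → N → P → ℕ → ℕ) (yb : ℕ → N → N → ℕ → ℕ)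
    -- block initial stocks: s0b 1 = s0 and recursively the available stock at the end of block k
    (s0b : ℕ → N → ℤ)
    (hs0b1 : ∀ i, s0b 1 i = s0 i)
    (hs0brec : ∀ k, 1 ≤ k → k < K → ∀ i,
      s0b (k + 1) i =
        Sder Ngrp (s0b k) (sb k) (tb (k - 1)) i (tb k - 1)
          + Rder W ℓ (xb k) (tb (k - 1)) i (tb k - 1)
          - Dder W (xb k) (tb (k - 1)) i (tb k - 1))
    -- no-crossing hypothesis: shipments sent in a block arrive within the block
    (hnocross : ∀ k, 1 ≤ k → k ≤ K → ∀ j i, (j, i) ∈ W →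
      ∀ t' ∈ Finset.Ico (tb (k - 1)) (tb k), tb k ≤ t' + ℓ j i → xb k j i t' = 0)
    -- the concatenated solution: at each t ∈ T_k it takes the block-k values
    (xc : N → N → ℕ → ℕ) (sc : N → P → ℕ → ℕ) (yc : N → N → ℕ → ℕ)
    (hxc : ∀ k, 1 ≤ k → k ≤ K → ∀ t ∈ Finset.Ico (tb (k - 1)) (tb k),
      ∀ i j, xc i j t = xb k i j t)
    (hsc : ∀ k, 1 ≤ k → k ≤ K → ∀ t ∈ Finset.Ico (tb (k - 1)) (tb k),
      ∀ (i : N) (p : P), sc i p t = sb k i p t)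
    (hyc : ∀ k, 1 ≤ k → k ≤ K → ∀ t ∈ Finset.Ico (tb (k - 1)) (tb k),
      ∀ i j, yc i j t = yb k i j t) :
    ∀ i : N, ∀ k, 1 ≤ k → k ≤ K → ∀ t ∈ Finset.Ico (tb (k - 1)) (tb k),
      Sder Ngrp (s0b k) (sb k) (tb (k - 1)) i t
        + Rder W ℓ (xb k) (tb (k - 1)) i t
        - Dder W (xb k) (tb (k - 1)) i (t - 1)
      = Sder Ngrp s0 sc 1 i t + Rder W ℓ xc 1 i t - Dder W xc 1 i (t - 1) :=
  block_available_stock_eq_global_general N P W Ngrp s0 ℓ K tb htb0 htbmono xb sb s0b hs0b1 hs0brec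
    hnocross xc sc hxc hsc
end

section
/- Under the no-crossing hypothesis, if every block solution satisfies constraints (C1) and (C6) on its block T_k (with its block derived quantities and block initial stocks s⁰_i(k)), then the concatenated solution satisfies (C1) and (C6) on the whole horizon T: for all ω ∈ Ω, i ∈ N and t ∈ T, Σ_{j:(i,j)∈W} x_{ij}^t ≤ γ_i·H_i^{tω} and H_i^{tω} ≤ a_i, where H_i^{tω} is computed from the concatenated solution. -/
open Finset

/-- Under the no-crossing hypothesis, if every block solution satisfies
constraints (C1) and (C6) on its block `T_k` (with block derived quantities and block
initial stocks `s0b k`), then the concatenated solution satisfies (C1) and (C6) on the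
whole horizon `T = {1,…,q}`, with `H_i^{tω}` computed from the concatenated solution and
the original initial stocks `s0`. -/
theorem concatenated_satisfies_C1_C6
    (N P Ω : Type) [Fintype N] [DecidableEq N] [Fintype P]
    (W : Finset (N × N)) (Ngrp : P → Finset N) (q : ℕ)
    (s0 : N → ℤ) (ℓ : N → N → ℕ) (γ : N → ℝ) (a : N → ℕ) (d : N → ℕ → Ω → ℕ)
    -- breakpoints 1 = tb 0 < tb 1 < ⋯ < tb K = q + 1
    (K : ℕ) (hK : 1 ≤ K)
    (tb : ℕ → ℕ) (htb0 : tb 0 = 1) (htbK : tb K = q + 1)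
    (htbmono : ∀ k < K, tb k < tb (k + 1))
    -- block solutions
    (xb : ℕ → N → N → ℕ → ℕ) (sb : ℕ → N → P → ℕ → ℕ) (yb : ℕ → N → N → ℕ → ℕ)
    -- block initial stocks: s0b 1 = s0 and recursively the available stock at the end of block k
    (s0b : ℕ → N → ℤ)
    (hs0b1 : ∀ i, s0b 1 i = s0 i)
    (hs0brec : ∀ k, 1 ≤ k → k < K → ∀ i,
      s0b (k + 1) i =
        Sder Ngrp (s0b k) (sb k) (tb (k - 1)) i (tb k - 1)
          + Rder W ℓ (xb k) (tb (k - 1)) i (tb k - 1)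
          - Dder W (xb k) (tb (k - 1)) i (tb k - 1))
    -- no-crossing hypothesis: shipments sent in a block arrive within the block
    (hnocross : ∀ k, 1 ≤ k → k ≤ K → ∀ j i, (j, i) ∈ W →
      ∀ t' ∈ Finset.Ico (tb (k - 1)) (tb k), tb k ≤ t' + ℓ j i → xb k j i t' = 0)
    -- block constraint (C1)
    (hbC1 : ∀ k, 1 ≤ k → k ≤ K → ∀ (ω : Ω) (i : N), ∀ t ∈ Finset.Ico (tb (k - 1)) (tb k),
      (∑ j ∈ Finset.univ.filter (fun j => (i, j) ∈ W), (xb k i j t : ℝ)) ≤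
        γ i * ((Hder W Ngrp ℓ d (s0b k) (xb k) (sb k) (tb (k - 1)) ω i t : ℤ) : ℝ))
    -- block constraint (C6)
    (hbC6 : ∀ k, 1 ≤ k → k ≤ K → ∀ (ω : Ω) (i : N), ∀ t ∈ Finset.Ico (tb (k - 1)) (tb k),
      Hder W Ngrp ℓ d (s0b k) (xb k) (sb k) (tb (k - 1)) ω i t ≤ (a i : ℤ))
    -- the concatenated solution: at each t ∈ T_k it takes the block-k values
    (xc : N → N → ℕ → ℕ) (sc : N → P → ℕ → ℕ) (yc : N → N → ℕ → ℕ)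
    (hxc : ∀ k, 1 ≤ k → k ≤ K → ∀ t ∈ Finset.Ico (tb (k - 1)) (tb k),
      ∀ i j, xc i j t = xb k i j t)
    (hsc : ∀ k, 1 ≤ k → k ≤ K → ∀ t ∈ Finset.Ico (tb (k - 1)) (tb k),
      ∀ (i : N) (p : P), sc i p t = sb k i p t)
    (hyc : ∀ k, 1 ≤ k → k ≤ K → ∀ t ∈ Finset.Ico (tb (k - 1)) (tb k),
      ∀ i j, yc i j t = yb k i j t) :
    (∀ (ω : Ω) (i : N), ∀ t ∈ Finset.Icc 1 q,
      (∑ j ∈ Finset.univ.filter (fun j => (i, j) ∈ W), (xc i j t : ℝ)) ≤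
        γ i * ((Hder W Ngrp ℓ d s0 xc sc 1 ω i t : ℤ) : ℝ)) ∧
    (∀ (ω : Ω) (i : N), ∀ t ∈ Finset.Icc 1 q,
      Hder W Ngrp ℓ d s0 xc sc 1 ω i t ≤ (a i : ℤ)) := by
  
  -- monotonicity of breakpoints
  have htbmono' : ∀ m k, m ≤ k → k ≤ K → tb m ≤ tb k := by
    intro m k hmk hkK
    induction k with
    | zero =>
      have hm0 : m = 0 := Nat.le_zero.mp hmk
      subst hm0; exact le_rfl
    | succ n ih =>
      rcases Nat.eq_or_lt_of_le hmk with h | h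
      · subst h; exact le_rfl
      · have h1 : tb m ≤ tb n := ih (by omega) (by omega)
        have h2 := htbmono n (by omega)
        omega
  have htb1 : ∀ k, k ≤ K → 1 ≤ tb k := by
    intro k hk
    have := htbmono' 0 k (Nat.zero_le _) hk
    omega
  -- rewriting Icc as Ioc
  have hIcc : ∀ a t : ℕ, 1 ≤ a → Finset.Icc a t = Finset.Ioc (a - 1) t := by
    intro a t ha
    ext x
    simp only [Finset.mem_Icc, Finset.mem_Ioc]
    omega
  -- locating a period in a block
  have hblock : ∀ t, 1 ≤ t → ∀ k, k ≤ K → t < tb k →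
      ∃ m, 1 ≤ m ∧ m ≤ k ∧ tb (m - 1) ≤ t ∧ t < tb m := by
    intro t ht k
    induction k with
    | zero => intro _ hlt; rw [htb0] at hlt; omega
    | succ n ih =>
      intro hK' hlt
      by_cases h : tb n ≤ t
      · exact ⟨n + 1, by omega, le_refl _, by simpa using h, hlt⟩
      · obtain ⟨m, hm1, hm2, hm3, hm4⟩ := ih (by omega) (by omega)
        exact ⟨m, hm1, by omega, hm3, hm4⟩
  -- no-crossing for the concatenated solution
  have hzero : ∀ k, 1 ≤ k → k ≤ K → ∀ j i, (j, i) ∈ W → ∀ t', 1 ≤ t' → t' < tb k →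
      tb k ≤ t' + ℓ j i → xc j i t' = 0 := by
    intro k hk1 hkK j i hW t' ht'1 ht'k hle
    obtain ⟨m, hm1, hmk, hml, hmu⟩ := hblock t' ht'1 k hkK ht'k
    rw [hxc m hm1 (hmk.trans hkK) t' (Finset.mem_Ico.mpr ⟨hml, hmu⟩) j i]
    exact hnocross m hm1 (hmk.trans hkK) j i hW t' (Finset.mem_Ico.mpr ⟨hml, hmu⟩)
      (le_trans (htbmono' m k hmk hkK) hle)
  -- decomposition of the delivered quantity
  have hDgen : ∀ k, 1 ≤ k → k ≤ K → ∀ (i : N) (u : ℕ), tb (k - 1) - 1 ≤ u → u ≤ tb k - 1 →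
      Dder W xc 1 i u = Dder W xc 1 i (tb (k - 1) - 1) + Dder W (xb k) (tb (k - 1)) i u := by
    intro k hk1 hkK i u hu1 hu2
    have hstart1 : 1 ≤ tb (k - 1) := htb1 (k - 1) (by omega)
    have hstartk : tb (k - 1) < tb k := by
      have := htbmono (k - 1) (by omega)
      have : tb (k - 1) < tb (k - 1 + 1) := this
      have hkk : k - 1 + 1 = k := by omega
      rwa [hkk] at this
    unfold Dder
    rw [← Finset.sum_add_distrib]
    apply Finset.sum_congr rfl
    intro j hj
    rw [hIcc 1 u (by omega), hIcc 1 (tb (k - 1) - 1) (by omega),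
      hIcc (tb (k - 1)) u hstart1]
    rw [← Finset.sum_Ioc_consecutive (fun t' => (xc i j t' : ℤ)) (by omega : (1:ℕ) - 1 ≤ tb (k - 1) - 1) (by omega : tb (k - 1) - 1 ≤ u)]
    congr 1
    apply Finset.sum_congr rfl
    intro t' ht'
    simp only [Finset.mem_Ioc] at ht'
    rw [hxc k hk1 hkK t' (Finset.mem_Ico.mpr ⟨by omega, by omega⟩) i j]
  -- core identity: stock + received over the whole horizon equals block quantity
  have hCore : ∀ k, 1 ≤ k → k ≤ K → ∀ (i : N) (t : ℕ), tb (k - 1) ≤ t → t < tb k →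
      Sder Ngrp s0 sc 1 i t + Rder W ℓ xc 1 i t - Dder W xc 1 i (tb (k - 1) - 1)
        = Sder Ngrp (s0b k) (sb k) (tb (k - 1)) i t + Rder W ℓ (xb k) (tb (k - 1)) i t := by
    intro k
    induction k with
    | zero => omega
    | succ n ih =>
      intro _ hkK i t ht1 ht2
      simp only [Nat.add_sub_cancel] at ht1 ht2 ⊢
      by_cases hn : n = 0
      · -- base case: first block
        subst hn
        simp only [Nat.zero_add] at ht2 ⊢
        rw [htb0] at ht1 ⊢
        have hD0 : Dder W xc 1 i (1 - 1) = 0 := by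
          unfold Dder
          simp
        rw [hD0]
        have hSeq : Sder Ngrp s0 sc 1 i t = Sder Ngrp (s0b 1) (sb 1) 1 i t := by
          unfold Sder
          rw [hs0b1]
          congr 1
          apply Finset.sum_congr rfl
          intro p _
          by_cases h : i ∈ Ngrp p
          · simp only [h, if_true]
            apply Finset.sum_congr rfl
            intro t' ht'
            simp only [Finset.mem_Icc] at ht'
            rw [hsc 1 le_rfl hkK t' (Finset.mem_Ico.mpr ⟨by simp [htb0]; omega, by omega⟩) i p]
          · simp [h]
        have hReq : Rder W ℓ xc 1 i t = Rder W ℓ (xb 1) 1 i t := by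
          unfold Rder
          apply Finset.sum_congr rfl
          intro j hj
          apply Finset.sum_congr rfl
          intro t' ht'
          simp only [Finset.mem_filter, Finset.mem_Icc] at ht'
          rw [hxc 1 le_rfl hkK t' (Finset.mem_Ico.mpr ⟨by simp [htb0]; omega, by omega⟩) j i]
        rw [hSeq, hReq]
        ring
      · -- inductive step: block n + 1, using block n
        have hn1 : 1 ≤ n := by omega
        have hnK : n ≤ K := by omega
        have hb1 : 1 ≤ tb n := htb1 n hnK
        have hprevlt : tb (n - 1) < tb n := by
          have h := htbmono (n - 1) (by omega)
          have hkk : n - 1 + 1 = n := by omega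
          rwa [hkk] at h
        have hprev1 : 1 ≤ tb (n - 1) := htb1 (n - 1) (by omega)
        -- split of plain sums over Icc 1 t at tb n
        have hsplit : ∀ f : ℕ → ℤ, ∑ t' ∈ Finset.Icc 1 t, f t'
            = (∑ t' ∈ Finset.Icc 1 (tb n - 1), f t') + ∑ t' ∈ Finset.Icc (tb n) t, f t' := by
          intro f
          rw [hIcc 1 t le_rfl, hIcc 1 (tb n - 1) le_rfl, hIcc (tb n) t hb1]
          exact (Finset.sum_Ioc_consecutive f (by omega) (by omega)).symm
        -- stock decomposition
        have hS : Sder Ngrp s0 sc 1 i t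
            = Sder Ngrp s0 sc 1 i (tb n - 1) - s0b (n + 1) i
              + Sder Ngrp (s0b (n + 1)) (sb (n + 1)) (tb n) i t := by
          unfold Sder
          have hterm : ∀ p : P,
              (if i ∈ Ngrp p then ∑ t' ∈ Finset.Icc 1 t, (sc i p t' : ℤ) else 0)
              = (if i ∈ Ngrp p then ∑ t' ∈ Finset.Icc 1 (tb n - 1), (sc i p t' : ℤ) else 0)
                + (if i ∈ Ngrp p then ∑ t' ∈ Finset.Icc (tb n) t, (sb (n + 1) i p t' : ℤ) else 0) := by
            intro p
            by_cases h : i ∈ Ngrp p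
            · simp only [h, if_true]
              rw [hsplit]
              congr 1
              apply Finset.sum_congr rfl
              intro t' ht'
              simp only [Finset.mem_Icc] at ht'
              rw [hsc (n + 1) (by omega) hkK t'
                (Finset.mem_Ico.mpr ⟨by simpa using ht'.1, by omega⟩) i p]
            · simp [h]
          rw [Finset.sum_congr rfl (fun p _ => hterm p), Finset.sum_add_distrib]
          ring
        -- received decomposition
        have hR : Rder W ℓ xc 1 i t
            = Rder W ℓ xc 1 i (tb n - 1) + Rder W ℓ (xb (n + 1)) (tb n) i t := by
          unfold Rder
          rw [← Finset.sum_add_distrib]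
          apply Finset.sum_congr rfl
          intro j hj
          simp only [Finset.mem_filter] at hj
          rw [Finset.sum_filter, Finset.sum_filter, Finset.sum_filter, hsplit]
          congr 1
          · -- past shipments: arrivals are frozen by no-crossing
            apply Finset.sum_congr rfl
            intro t' ht'
            simp only [Finset.mem_Icc] at ht'
            by_cases h1 : t' + ℓ j i ≤ tb n - 1
            · rw [if_pos (by omega), if_pos h1]
            · rw [if_neg h1]
              by_cases h2 : t' + ℓ j i ≤ t
              · rw [if_pos h2]
                have hz : xc j i t' = 0 :=
                  hzero n hn1 hnK j i hj.2 t' ht'.1 (by omega) (by omega)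
                rw [hz]
                simp
              · rw [if_neg h2]
          · -- current block shipments
            apply Finset.sum_congr rfl
            intro t' ht'
            simp only [Finset.mem_Icc] at ht'
            rw [hxc (n + 1) (by omega) hkK t'
              (Finset.mem_Ico.mpr ⟨by simpa using ht'.1, by omega⟩) j i]
        -- delivered decomposition for end of block n
        have hD : Dder W xc 1 i (tb n - 1)
            = Dder W xc 1 i (tb (n - 1) - 1) + Dder W (xb n) (tb (n - 1)) i (tb n - 1) :=
          hDgen n hn1 hnK i (tb n - 1) (by omega) le_rfl
        have hih := ih hn1 hnK i (tb n - 1) (by omega) (by omega)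
        have hrec := hs0brec n hn1 (by omega) i
        rw [hS, hR, hD]
        linarith [hih, hrec]
  -- transfer of the excess quantity
  have hHeq : ∀ (ω : Ω) (i : N) (t : ℕ) (m : ℕ), 1 ≤ m → m ≤ K →
      tb (m - 1) ≤ t → t < tb m → 1 ≤ t →
      Hder W Ngrp ℓ d s0 xc sc 1 ω i t
        = Hder W Ngrp ℓ d (s0b m) (xb m) (sb m) (tb (m - 1)) ω i t := by
    intro ω i t m hm1 hmK hml hmu ht1
    unfold Hder
    have e1 := hCore m hm1 hmK i t hml hmu
    have e2 := hDgen m hm1 hmK i (t - 1) (by omega) (by omega)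
    congr 1
    linarith [e1, e2]
  constructor
  · intro ω i t ht
    simp only [Finset.mem_Icc] at ht
    obtain ⟨m, hm1, hmK, hml, hmu⟩ := hblock t ht.1 K le_rfl (by omega)
    have hx : (∑ j ∈ Finset.univ.filter (fun j => (i, j) ∈ W), (xc i j t : ℝ))
        = ∑ j ∈ Finset.univ.filter (fun j => (i, j) ∈ W), (xb m i j t : ℝ) := by
      apply Finset.sum_congr rfl
      intro j _
      rw [hxc m hm1 hmK t (Finset.mem_Ico.mpr ⟨hml, hmu⟩) i j]
    rw [hx, hHeq ω i t m hm1 hmK hml hmu ht.1]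
    exact hbC1 m hm1 hmK ω i t (Finset.mem_Ico.mpr ⟨hml, hmu⟩)
  · intro ω i t ht
    simp only [Finset.mem_Icc] at ht
    obtain ⟨m, hm1, hmK, hml, hmu⟩ := hblock t ht.1 K le_rfl (by omega)
    rw [hHeq ω i t m hm1 hmK hml hmu ht.1]
    exact hbC6 m hm1 hmK ω i t (Finset.mem_Ico.mpr ⟨hml, hmu⟩)
end

section
/- Suppose each block solution satisfies constraints (C1)–(C6) on its block T_k (with its block derived quantities and block initial stocks s⁰_i(k)), and the no-crossing hypothesis holds. Let p^ω ≥ 0 for ω ∈ Ω with Σ_{ω∈Ω} p^ω = 1, and for any solution z of the model define Φ₄(z) = Σ_{ω∈Ω} p^ω Σ_{i∈N} Σ_{t∈T} max{0, d_i^{tω} + D_i^t − S_i^t − R_i^t}. Then the concatenated solution is feasible for StochP and its value Φ₄(concatenated solution) belongs to the set V = {Φ₄(z) | z feasible for StochP}; in particular Φ₄(concatenated solution) is an upper bound for the infimum of V, i.e., the algorithm's output gives an upper bound on the optimal value of StochP with objective Φ₄. -/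
open Finset

/-- The objective `Φ₄`: total non-covered expected demand,
`Σ_ω p^ω Σ_i Σ_{t∈T} max{0, d_i^{tω} + D_i^t − S_i^t − R_i^t}`. -/
def Phi4 {N P Ω : Type} [Fintype N] [DecidableEq N] [Fintype P] [Fintype Ω]
    (W : Finset (N × N)) (Ngrp : P → Finset N) (q : ℕ) (s0 : N → ℤ)
    (ℓ : N → N → ℕ) (d : N → ℕ → Ω → ℕ) (pw : Ω → ℝ)
    (x : N → N → ℕ → ℕ) (s : N → P → ℕ → ℕ) : ℝ :=
  ∑ ω : Ω, pw ω * ∑ i : N, ∑ t ∈ Finset.Icc 1 q,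
    ((max 0 ((d i t ω : ℤ) + Dder W x 1 i t - Sder Ngrp s0 s 1 i t
        - Rder W ℓ x 1 i t) : ℤ) : ℝ)

/-- If each block solution satisfies (C1)–(C6) on its block `T_k` (with
block derived quantities and block initial stocks), the no-crossing hypothesis holds, and
`p^ω ≥ 0` with `Σ_ω p^ω = 1`, then the concatenated solution is feasible for (StochP),
its value `Φ₄` belongs to the set `V` of objective values of feasible solutions, and in
particular `Φ₄(concatenated solution)` is an upper bound on `inf V`, the optimal value of
(StochP) with objective `Φ₄`. -/
theorem mathheuristic_upper_bound
    (N P Ω : Type) [Fintype N] [DecidableEq N] [Fintype P] [Fintype Ω]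
    (W : Finset (N × N)) (Ngrp : P → Finset N) (q : ℕ)
    (s0 : N → ℤ) (qk : P → ℕ → ℕ) (Q : N → ℕ) (ℓ : N → N → ℕ)
    (γ : N → ℝ) (g : N → ℕ) (a : N → ℕ) (d : N → ℕ → Ω → ℕ)
    -- scenario probabilities
    (pw : Ω → ℝ) (hpw : ∀ ω : Ω, 0 ≤ pw ω) (hpwsum : ∑ ω : Ω, pw ω = 1)
    -- breakpoints 1 = tb 0 < tb 1 < ⋯ < tb K = q + 1
    (K : ℕ) (hK : 1 ≤ K)
    (tb : ℕ → ℕ) (htb0 : tb 0 = 1) (htbK : tb K = q + 1)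
    (htbmono : ∀ k < K, tb k < tb (k + 1))
    -- block solutions
    (xb : ℕ → N → N → ℕ → ℕ) (sb : ℕ → N → P → ℕ → ℕ) (yb : ℕ → N → N → ℕ → ℕ)
    (hybbin : ∀ k i j t, yb k i j t ≤ 1)
    -- block initial stocks: s0b 1 = s0 and recursively the available stock at the end of block k
    (s0b : ℕ → N → ℤ)
    (hs0b1 : ∀ i, s0b 1 i = s0 i)
    (hs0brec : ∀ k, 1 ≤ k → k < K → ∀ i,
      s0b (k + 1) i =
        Sder Ngrp (s0b k) (sb k) (tb (k - 1)) i (tb k - 1)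
          + Rder W ℓ (xb k) (tb (k - 1)) i (tb k - 1)
          - Dder W (xb k) (tb (k - 1)) i (tb k - 1))
    -- no-crossing hypothesis: shipments sent in a block arrive within the block
    (hnocross : ∀ k, 1 ≤ k → k ≤ K → ∀ j i, (j, i) ∈ W →
      ∀ t' ∈ Finset.Ico (tb (k - 1)) (tb k), tb k ≤ t' + ℓ j i → xb k j i t' = 0)
    -- block constraint (C1)
    (hbC1 : ∀ k, 1 ≤ k → k ≤ K → ∀ (ω : Ω) (i : N), ∀ t ∈ Finset.Ico (tb (k - 1)) (tb k),
      (∑ j ∈ Finset.univ.filter (fun j => (i, j) ∈ W), (xb k i j t : ℝ)) ≤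
        γ i * ((Hder W Ngrp ℓ d (s0b k) (xb k) (sb k) (tb (k - 1)) ω i t : ℤ) : ℝ))
    -- block constraint (C2)
    (hbC2 : ∀ k, 1 ≤ k → k ≤ K → ∀ i j, (i, j) ∈ W → ∀ t ∈ Finset.Ico (tb (k - 1)) (tb k),
      yb k i j t ≤ xb k i j t ∧ xb k i j t ≤ g i * yb k i j t)
    -- block constraint (C3)
    (hbC3 : ∀ k, 1 ≤ k → k ≤ K → ∀ i : N, ∀ t ∈ Finset.Ico (tb (k - 1)) (tb k),
      ∑ j ∈ Finset.univ.filter (fun j => (i, j) ∈ W), yb k i j t ≤ Q i)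
    -- block constraint (C4)
    (hbC4 : ∀ k, 1 ≤ k → k ≤ K → ∀ p : P, ∀ t ∈ Finset.Ico (tb (k - 1)) (tb k),
      ∑ i ∈ Ngrp p, sb k i p t = qk p t)
    -- block constraint (C5)
    (hbC5 : ∀ k, 1 ≤ k → k ≤ K → ∀ i j k', (i, j) ∈ W → (j, k') ∈ W →
      ∀ t ∈ Finset.Ico (tb (k - 1)) (tb k), yb k i j t + yb k j k' t ≤ 1)
    -- block constraint (C6)
    (hbC6 : ∀ k, 1 ≤ k → k ≤ K → ∀ (ω : Ω) (i : N), ∀ t ∈ Finset.Ico (tb (k - 1)) (tb k),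
      Hder W Ngrp ℓ d (s0b k) (xb k) (sb k) (tb (k - 1)) ω i t ≤ (a i : ℤ))
    -- the concatenated solution: at each t ∈ T_k it takes the block-k values
    (xc : N → N → ℕ → ℕ) (sc : N → P → ℕ → ℕ) (yc : N → N → ℕ → ℕ)
    (hxc : ∀ k, 1 ≤ k → k ≤ K → ∀ t ∈ Finset.Ico (tb (k - 1)) (tb k),
      ∀ i j, xc i j t = xb k i j t)
    (hsc : ∀ k, 1 ≤ k → k ≤ K → ∀ t ∈ Finset.Ico (tb (k - 1)) (tb k),
      ∀ (i : N) (p : P), sc i p t = sb k i p t)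
    (hyc : ∀ k, 1 ≤ k → k ≤ K → ∀ t ∈ Finset.Ico (tb (k - 1)) (tb k),
      ∀ i j, yc i j t = yb k i j t)
    (hycz : ∀ i j t, yc i j t ≤ 1) :
    Feasible W Ngrp q s0 qk Q ℓ γ g a d xc sc yc ∧
    Phi4 W Ngrp q s0 ℓ d pw xc sc ∈
      {v : ℝ | ∃ (x : N → N → ℕ → ℕ) (s : N → P → ℕ → ℕ) (y : N → N → ℕ → ℕ),
        Feasible W Ngrp q s0 qk Q ℓ γ g a d x s y ∧ v = Phi4 W Ngrp q s0 ℓ d pw x s} ∧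
    sInf {v : ℝ | ∃ (x : N → N → ℕ → ℕ) (s : N → P → ℕ → ℕ) (y : N → N → ℕ → ℕ),
        Feasible W Ngrp q s0 qk Q ℓ γ g a d x s y ∧ v = Phi4 W Ngrp q s0 ℓ d pw x s} ≤
      Phi4 W Ngrp q s0 ℓ d pw xc sc := by
  
  classical
  -- monotonicity of tb on [0, K]
  have hmono : ∀ (b a : ℕ), a ≤ b → b ≤ K → tb a ≤ tb b := by
    intro b
    induction b with
    | zero =>
      intro a h _
      exact le_of_eq (congrArg tb (Nat.le_zero.mp h))
    | succ n ih =>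
      intro a h hK'
      by_cases hc : a = n + 1
      · rw [hc]
      · have h2 : tb a ≤ tb n := ih a (by omega) (by omega)
        have h3 : tb n < tb (n + 1) := htbmono n (by omega)
        omega
  -- every period 1 ≤ t ≤ q lies in a unique block
  have hblock : ∀ t, 1 ≤ t → t ≤ q → ∃ k, 1 ≤ k ∧ k ≤ K ∧ tb (k - 1) ≤ t ∧ t < tb k := by
    intro t ht1 ht2
    have haux : ∀ m, m ≤ K → t < tb m → ∃ k, 1 ≤ k ∧ k ≤ m ∧ tb (k - 1) ≤ t ∧ t < tb k := by
      intro m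
      induction m with
      | zero => intro _ h; rw [htb0] at h; omega
      | succ n ih =>
        intro hmK hlt
        by_cases h : tb n ≤ t
        · exact ⟨n + 1, by omega, le_rfl, by simpa using h, hlt⟩
        · obtain ⟨k, h1, h2, h3, h4⟩ := ih (by omega) (by omega)
          exact ⟨k, h1, by omega, h3, h4⟩
    obtain ⟨k, h1, h2, h3, h4⟩ := haux K le_rfl (by rw [htbK]; omega)
    exact ⟨k, h1, h2, h3, h4⟩
  -- shipments of the concatenated solution that would cross a breakpoint are zero
  have hzero : ∀ j i, (j, i) ∈ W → ∀ t' b, 1 ≤ t' → t' ≤ q → b ≤ K → t' < tb b →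
      tb b ≤ t' + ℓ j i → xc j i t' = 0 := by
    intro j i hW t' b h1 h2 hbK hlt harr
    obtain ⟨k'', hk1, hkK, hge, hltk⟩ := hblock t' h1 h2
    have hkb : k'' ≤ b := by
      by_contra hcon
      have : tb b ≤ tb (k'' - 1) := hmono (k'' - 1) b (by omega) (by omega)
      omega
    have hbb : tb k'' ≤ tb b := hmono b k'' hkb hbK
    rw [hxc k'' hk1 hkK t' (Finset.mem_Ico.mpr ⟨hge, hltk⟩) j i]
    exact hnocross k'' hk1 hkK j i hW t' (Finset.mem_Ico.mpr ⟨hge, hltk⟩) (by omega)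
  -- splitting a sum over Icc 1 b at a
  have hsplit : ∀ (a b : ℕ) (f : ℕ → ℤ), 1 ≤ a → a ≤ b + 1 →
      ∑ t' ∈ Finset.Icc 1 b, f t'
        = (∑ t' ∈ Finset.Icc 1 (a - 1), f t') + ∑ t' ∈ Finset.Icc a b, f t' := by
    intro a b f ha hab
    have e1 : Finset.Icc 1 b = Finset.Ioc 0 b := by ext x; simp [Nat.lt_iff_add_one_le]
    have e2 : Finset.Icc 1 (a - 1) = Finset.Ioc 0 (a - 1) := by
      ext x; simp [Nat.lt_iff_add_one_le]
    have e3 : Finset.Icc a b = Finset.Ioc (a - 1) b := by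
      ext x; simp only [Finset.mem_Icc, Finset.mem_Ioc]; omega
    rw [e1, e2, e3]
    exact (Finset.sum_Ioc_consecutive f (by omega) (by omega)).symm
  -- the key splitting identity for the concatenated derived quantities
  have hF : ∀ k, 1 ≤ k → k ≤ K → ∀ t, tb (k - 1) ≤ t → t < tb k →
      ∀ u, tb (k - 1) - 1 ≤ u → u ≤ t → ∀ i,
      Sder Ngrp s0 sc 1 i t + Rder W ℓ xc 1 i t - Dder W xc 1 i u
        = (Sder Ngrp s0 sc 1 i (tb (k - 1) - 1) + Rder W ℓ xc 1 i (tb (k - 1) - 1)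
            - Dder W xc 1 i (tb (k - 1) - 1))
          - s0b k i
          + (Sder Ngrp (s0b k) (sb k) (tb (k - 1)) i t + Rder W ℓ (xb k) (tb (k - 1)) i t
              - Dder W (xb k) (tb (k - 1)) i u) := by
    intro k hk1 hkK t hts htk u hu1 hu2 i
    have h1 : 1 ≤ tb (k - 1) := by
      have := hmono (k - 1) 0 (Nat.zero_le _) (by omega); omega
    have hqK : tb (k - 1) ≤ q + 1 := by
      have := hmono K (k - 1) (by omega) le_rfl; omega
    -- S part
    have hS : Sder Ngrp s0 sc 1 i t
        = Sder Ngrp s0 sc 1 i (tb (k - 1) - 1)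
          + (Sder Ngrp (s0b k) (sb k) (tb (k - 1)) i t - s0b k i) := by
      simp only [Sder]
      have hterm : ∀ p : P,
          (if i ∈ Ngrp p then ∑ t' ∈ Finset.Icc 1 t, (sc i p t' : ℤ) else 0)
            = (if i ∈ Ngrp p then ∑ t' ∈ Finset.Icc 1 (tb (k - 1) - 1), (sc i p t' : ℤ) else 0)
              + (if i ∈ Ngrp p then ∑ t' ∈ Finset.Icc (tb (k - 1)) t, (sb k i p t' : ℤ) else 0) := by
        intro p
        by_cases h : i ∈ Ngrp p
        · simp only [if_pos h]
          rw [hsplit (tb (k - 1)) t _ h1 (by omega)]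
          congr 1
          refine Finset.sum_congr rfl (fun t' ht' => ?_)
          have ht'' := Finset.mem_Icc.mp ht'
          rw [hsc k hk1 hkK t' (Finset.mem_Ico.mpr ⟨ht''.1, by omega⟩) i p]
        · simp [h]
      have h2 : ∑ p : P, (if i ∈ Ngrp p then ∑ t' ∈ Finset.Icc 1 t, (sc i p t' : ℤ) else 0)
          = (∑ p : P, (if i ∈ Ngrp p then
              ∑ t' ∈ Finset.Icc 1 (tb (k - 1) - 1), (sc i p t' : ℤ) else 0))
            + ∑ p : P, (if i ∈ Ngrp p then
              ∑ t' ∈ Finset.Icc (tb (k - 1)) t, (sb k i p t' : ℤ) else 0) := by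
        rw [← Finset.sum_add_distrib]
        exact Finset.sum_congr rfl (fun p _ => hterm p)
      rw [h2]; ring
    -- R part
    have hR : Rder W ℓ xc 1 i t
        = Rder W ℓ xc 1 i (tb (k - 1) - 1) + Rder W ℓ (xb k) (tb (k - 1)) i t := by
      simp only [Rder]
      rw [← Finset.sum_add_distrib]
      refine Finset.sum_congr rfl (fun j hj => ?_)
      have hjW : (j, i) ∈ W := by simpa using hj
      rw [Finset.sum_filter, Finset.sum_filter, Finset.sum_filter]
      rw [hsplit (tb (k - 1)) t _ h1 (by omega)]
      congr 1
      · refine Finset.sum_congr rfl (fun t' ht' => ?_)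
        have ht'' := Finset.mem_Icc.mp ht'
        by_cases harr : t' + ℓ j i ≤ tb (k - 1) - 1
        · rw [if_pos (by omega : t' + ℓ j i ≤ t), if_pos harr]
        · rw [if_neg harr]
          by_cases harr2 : t' + ℓ j i ≤ t
          · rw [if_pos harr2]
            have hx0 : xc j i t' = 0 :=
              hzero j i hjW t' (k - 1) ht''.1 (by omega) (by omega) (by omega) (by omega)
            simp [hx0]
          · rw [if_neg harr2]
      · refine Finset.sum_congr rfl (fun t' ht' => ?_)
        have ht'' := Finset.mem_Icc.mp ht'
        rw [hxc k hk1 hkK t' (Finset.mem_Ico.mpr ⟨ht''.1, by omega⟩) j i]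
    -- D part
    have hD : Dder W xc 1 i u
        = Dder W xc 1 i (tb (k - 1) - 1) + Dder W (xb k) (tb (k - 1)) i u := by
      simp only [Dder]
      rw [← Finset.sum_add_distrib]
      refine Finset.sum_congr rfl (fun j hj => ?_)
      by_cases hcase : tb (k - 1) ≤ u
      · rw [hsplit (tb (k - 1)) u _ h1 (by omega)]
        congr 1
        refine Finset.sum_congr rfl (fun t' ht' => ?_)
        have ht'' := Finset.mem_Icc.mp ht'
        rw [hxc k hk1 hkK t' (Finset.mem_Ico.mpr ⟨ht''.1, by omega⟩) i j]
      · have he : Finset.Icc (tb (k - 1)) u = ∅ := Finset.Icc_eq_empty (by omega)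
        rw [he, Finset.sum_empty, add_zero, show u = tb (k - 1) - 1 by omega]
    linarith [hS, hR, hD]
  -- the end-of-block stock of the concatenated solution equals the block initial stock
  have hE : ∀ k, 1 ≤ k → k ≤ K → ∀ i,
      Sder Ngrp s0 sc 1 i (tb (k - 1) - 1) + Rder W ℓ xc 1 i (tb (k - 1) - 1)
        - Dder W xc 1 i (tb (k - 1) - 1) = s0b k i := by
    intro k
    induction k with
    | zero => intro h; exact absurd h (by omega)
    | succ n ih =>
      intro _ hK' i
      rcases Nat.eq_zero_or_pos n with hn | hn
      · subst hn
        have he : Finset.Icc 1 (tb 0 - 1) = ∅ := by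
          rw [htb0]; exact Finset.Icc_eq_empty (by omega)
        simp [Sder, Rder, Dder, he, hs0b1]
      · have hn1 : 1 ≤ n := hn
        have hnK : n ≤ K := by omega
        have hprev := ih hn1 hnK i
        have htlt : tb (n - 1) < tb n := by
          have := htbmono (n - 1) (by omega)
          rwa [show n - 1 + 1 = n by omega] at this
        have h1n : 1 ≤ tb (n - 1) := by
          have := hmono (n - 1) 0 (Nat.zero_le _) (by omega); omega
        have hFn := hF n hn1 hnK (tb n - 1) (by omega) (by omega) (tb n - 1)
          (by omega) (by omega) i
        have hrec := hs0brec n hn1 (by omega) i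
        have hidx : (n + 1 - 1 : ℕ) = n := by omega
        rw [hidx]
        linarith [hFn, hprev, hrec]
  -- the effective excess of the concatenated solution matches the block one
  have hAvail : ∀ k, 1 ≤ k → k ≤ K → ∀ t, tb (k - 1) ≤ t → t < tb k → ∀ (ω : Ω) (i : N),
      Hder W Ngrp ℓ d s0 xc sc 1 ω i t
        = Hder W Ngrp ℓ d (s0b k) (xb k) (sb k) (tb (k - 1)) ω i t := by
    intro k hk1 hkK t ht1 ht2 ω i
    have hFk := hF k hk1 hkK t ht1 ht2 (t - 1) (by omega) (by omega) i
    have hEk := hE k hk1 hkK i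
    simp only [Hder]
    congr 1
    linarith [hFk, hEk]
  -- feasibility of the concatenated solution
  have hfeas : Feasible W Ngrp q s0 qk Q ℓ γ g a d xc sc yc := by
    refine ⟨hycz, ?_, ?_, ?_, ?_, ?_, ?_⟩
    · -- C1
      intro ω i t ht
      obtain ⟨ht1, ht2⟩ := Finset.mem_Icc.mp ht
      obtain ⟨k, hk1, hkK, hge, hlt⟩ := hblock t ht1 ht2
      have hmem : t ∈ Finset.Ico (tb (k - 1)) (tb k) := Finset.mem_Ico.mpr ⟨hge, hlt⟩
      have hx : (∑ j ∈ Finset.univ.filter (fun j => (i, j) ∈ W), (xc i j t : ℝ))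
          = ∑ j ∈ Finset.univ.filter (fun j => (i, j) ∈ W), (xb k i j t : ℝ) :=
        Finset.sum_congr rfl (fun j _ => by rw [hxc k hk1 hkK t hmem i j])
      rw [hx, hAvail k hk1 hkK t hge hlt ω i]
      exact hbC1 k hk1 hkK ω i t hmem
    · -- C2
      intro i j hij t ht
      obtain ⟨ht1, ht2⟩ := Finset.mem_Icc.mp ht
      obtain ⟨k, hk1, hkK, hge, hlt⟩ := hblock t ht1 ht2
      have hmem : t ∈ Finset.Ico (tb (k - 1)) (tb k) := Finset.mem_Ico.mpr ⟨hge, hlt⟩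
      rw [hxc k hk1 hkK t hmem i j, hyc k hk1 hkK t hmem i j]
      exact hbC2 k hk1 hkK i j hij t hmem
    · -- C3
      intro i t ht
      obtain ⟨ht1, ht2⟩ := Finset.mem_Icc.mp ht
      obtain ⟨k, hk1, hkK, hge, hlt⟩ := hblock t ht1 ht2
      have hmem : t ∈ Finset.Ico (tb (k - 1)) (tb k) := Finset.mem_Ico.mpr ⟨hge, hlt⟩
      have hy : (∑ j ∈ Finset.univ.filter (fun j => (i, j) ∈ W), yc i j t)
          = ∑ j ∈ Finset.univ.filter (fun j => (i, j) ∈ W), yb k i j t :=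
        Finset.sum_congr rfl (fun j _ => by rw [hyc k hk1 hkK t hmem i j])
      rw [hy]
      exact hbC3 k hk1 hkK i t hmem
    · -- C4
      intro p t ht
      obtain ⟨ht1, ht2⟩ := Finset.mem_Icc.mp ht
      obtain ⟨k, hk1, hkK, hge, hlt⟩ := hblock t ht1 ht2
      have hmem : t ∈ Finset.Ico (tb (k - 1)) (tb k) := Finset.mem_Ico.mpr ⟨hge, hlt⟩
      have hs : (∑ i ∈ Ngrp p, sc i p t) = ∑ i ∈ Ngrp p, sb k i p t :=
        Finset.sum_congr rfl (fun i _ => by rw [hsc k hk1 hkK t hmem i p])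
      rw [hs]
      exact hbC4 k hk1 hkK p t hmem
    · -- C5
      intro i j k' hij hjk t ht
      obtain ⟨ht1, ht2⟩ := Finset.mem_Icc.mp ht
      obtain ⟨k, hk1, hkK, hge, hlt⟩ := hblock t ht1 ht2
      have hmem : t ∈ Finset.Ico (tb (k - 1)) (tb k) := Finset.mem_Ico.mpr ⟨hge, hlt⟩
      rw [hyc k hk1 hkK t hmem i j, hyc k hk1 hkK t hmem j k']
      exact hbC5 k hk1 hkK i j k' hij hjk t hmem
    · -- C6
      intro ω i t ht
      obtain ⟨ht1, ht2⟩ := Finset.mem_Icc.mp ht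
      obtain ⟨k, hk1, hkK, hge, hlt⟩ := hblock t ht1 ht2
      have hmem : t ∈ Finset.Ico (tb (k - 1)) (tb k) := Finset.mem_Ico.mpr ⟨hge, hlt⟩
      rw [hAvail k hk1 hkK t hge hlt ω i]
      exact hbC6 k hk1 hkK ω i t hmem
  refine ⟨hfeas, ⟨xc, sc, yc, hfeas, rfl⟩, ?_⟩
  apply csInf_le
  · refine ⟨0, ?_⟩
    rintro v ⟨x, s, y, -, rfl⟩
    apply Finset.sum_nonneg
    intro ω _
    apply mul_nonneg (hpw ω)
    apply Finset.sum_nonneg; intro i _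
    apply Finset.sum_nonneg; intro t _
    exact_mod_cast le_max_left 0 _
  · exact ⟨xc, sc, yc, hfeas, rfl⟩
end
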